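/- For the corner-quarters Cantor set measure μ, there exists c > 0 such that for every n and every generation-n square Q_{n,j}, and any choice of three distinct generation-(n+1) subsquares Q₁, Q₂, Q₃ of Q_{n,j}, one has ∭_{Q₁×Q₂×Q₃} 1/R(z,w,ζ)² dμ(z)dμ(w)dμ(ζ) ≥ c·4²ⁿ·4⁻³ⁿ, i.e., the triple integral restricted to triples of points in three distinct children squares is bounded below by c·4⁻ⁿ. -/

import Mathlib

open Complex MeasureTheory

/-- Menger curvature `1/R(z₁,z₂,z₃) = 4·Area/(|z₁−z₂||z₂−z₃||z₃−z₁|)`,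
equal to `0` when the three points are collinear. -/
noncomputable def mengerCurvature (z₁ z₂ z₃ : ℂ) : ℝ :=
  4 * (|((z₂ - z₁) * (starRingEnd ℂ) (z₃ - z₁)).im| / 2) /
    (dist z₁ z₂ * dist z₂ z₃ * dist z₃ z₁)

/-- The four contractions generating the corner-quarters Cantor set: each maps the
unit square onto one of its four corner squares of one-quarter side length. -/
noncomputable def cornerMap (i : Fin 4) (z : ℂ) : ℂ :=
  ![(0 : ℂ), (3/4 : ℂ), (3/4 : ℝ) * Complex.I, (3/4 : ℂ) + (3/4 : ℝ) * Complex.I] i + z / 4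

/-- The closed unit square `[0,1] × [0,1]` in ℂ. -/
def unitSquare : Set ℂ := {z : ℂ | z.re ∈ Set.Icc (0 : ℝ) 1 ∧ z.im ∈ Set.Icc (0 : ℝ) 1}

/-- The generation-`n` squares of the corner-quarters Cantor construction, indexed by
words of length `n` in four letters. -/
noncomputable def cantorSquare : List (Fin 4) → Set ℂ
  | [] => unitSquare
  | i :: w => cornerMap i '' cantorSquare w

/-! ### Auxiliary lemmas -/

/-- Lower-left corner abscissa of the `i`-th corner square. -/
noncomputable def cornerRe (i : Fin 4) : ℝ := ![0, 3/4, 0, 3/4] i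

/-- Lower-left corner ordinate of the `i`-th corner square. -/
noncomputable def cornerIm (i : Fin 4) : ℝ := ![0, 0, 3/4, 3/4] i

lemma corner_bounds (i : Fin 4) {z : ℂ} (h : z ∈ cornerMap i '' unitSquare) :
    cornerRe i ≤ z.re ∧ z.re ≤ cornerRe i + 1/4 ∧
    cornerIm i ≤ z.im ∧ z.im ≤ cornerIm i + 1/4 := by
  obtain ⟨u, hu, rfl⟩ := h
  obtain ⟨⟨h1, h2⟩, h3, h4⟩ := hu
  have hre : (u/4).re = u.re/4 := by simp [Complex.div_ofNat_re]
  have him : (u/4).im = u.im/4 := by simp [Complex.div_ofNat_im]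
  fin_cases i <;>
    simp [cornerMap, cornerRe, cornerIm, Complex.add_re, Complex.add_im, hre, him] <;>
    refine ⟨by linarith, by linarith, by linarith, by linarith⟩

set_option maxHeartbeats 1000000 in
lemma cross_lower {i₁ i₂ i₃ : Fin 4} (h12 : i₁ ≠ i₂) (h13 : i₁ ≠ i₃) (h23 : i₂ ≠ i₃)
    {z w ζ : ℂ} (hz : z ∈ cornerMap i₁ '' unitSquare)
    (hw : w ∈ cornerMap i₂ '' unitSquare) (hζ : ζ ∈ cornerMap i₃ '' unitSquare) :
    3/16 ≤ |((w - z) * (starRingEnd ℂ) (ζ - z)).im| := by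
  obtain ⟨hz1, hz2, hz3, hz4⟩ := corner_bounds i₁ hz
  obtain ⟨hw1, hw2, hw3, hw4⟩ := corner_bounds i₂ hw
  obtain ⟨hζ1, hζ2, hζ3, hζ4⟩ := corner_bounds i₃ hζ
  have hE : ((w - z) * (starRingEnd ℂ) (ζ - z)).im
      = (w.im - z.im) * (ζ.re - z.re) - (w.re - z.re) * (ζ.im - z.im) := by
    simp [Complex.mul_im, Complex.sub_re, Complex.sub_im]; ring
  rw [hE, le_abs]
  clear hz hw hζ hE
  fin_cases i₁ <;> fin_cases i₂ <;> fin_cases i₃ <;>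
    simp_all [cornerRe, cornerIm] <;>
    first
      | (left; nlinarith)
      | (right; nlinarith)

lemma dist_le_two {i j : Fin 4} {z w : ℂ} (hz : z ∈ cornerMap i '' unitSquare)
    (hw : w ∈ cornerMap j '' unitSquare) : dist z w ≤ 2 := by
  obtain ⟨hz1, hz2, hz3, hz4⟩ := corner_bounds i hz
  obtain ⟨hw1, hw2, hw3, hw4⟩ := corner_bounds j hw
  have h0 : cornerRe i ∈ Set.Icc (0:ℝ) (3/4) := by fin_cases i <;> norm_num [cornerRe]
  have h0' : cornerIm i ∈ Set.Icc (0:ℝ) (3/4) := by fin_cases i <;> norm_num [cornerIm]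
  have h1 : cornerRe j ∈ Set.Icc (0:ℝ) (3/4) := by fin_cases j <;> norm_num [cornerRe]
  have h1' : cornerIm j ∈ Set.Icc (0:ℝ) (3/4) := by fin_cases j <;> norm_num [cornerIm]
  obtain ⟨ha, hb⟩ := h0; obtain ⟨ha', hb'⟩ := h0'
  obtain ⟨hc, hd⟩ := h1; obtain ⟨hc', hd'⟩ := h1'
  rw [Complex.dist_eq]
  calc ‖z - w‖ ≤ |(z - w).re| + |(z - w).im| :=
        Complex.norm_le_abs_re_add_abs_im _
    _ ≤ 2 := by
        rw [Complex.sub_re, Complex.sub_im]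
        have e1 : |z.re - w.re| ≤ 1 := abs_le.2 ⟨by linarith, by linarith⟩
        have e2 : |z.im - w.im| ≤ 1 := abs_le.2 ⟨by linarith, by linarith⟩
        linarith

/-- Base case: curvature lower bound for points in three distinct corner squares. -/
lemma menger_base {i₁ i₂ i₃ : Fin 4} (h12 : i₁ ≠ i₂) (h13 : i₁ ≠ i₃) (h23 : i₂ ≠ i₃)
    {z w ζ : ℂ} (hz : z ∈ cornerMap i₁ '' unitSquare)
    (hw : w ∈ cornerMap i₂ '' unitSquare) (hζ : ζ ∈ cornerMap i₃ '' unitSquare) :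
    3/64 ≤ mengerCurvature z w ζ := by
  have hc := cross_lower h12 h13 h23 hz hw hζ
  have hzw : z ≠ w := by
    rintro rfl
    simp at hc; linarith
  have hzζ : z ≠ ζ := by
    rintro rfl
    simp at hc; linarith
  have hwζ : w ≠ ζ := by
    rintro rfl
    rw [Complex.mul_conj] at hc
    simp at hc; linarith
  have d1 : 0 < dist z w := dist_pos.2 hzw
  have d2 : 0 < dist w ζ := dist_pos.2 hwζ
  have d3 : 0 < dist ζ z := dist_pos.2 (Ne.symm hzζ)
  have u1 : dist z w ≤ 2 := dist_le_two hz hw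
  have u2 : dist w ζ ≤ 2 := dist_le_two hw hζ
  have u3 : dist ζ z ≤ 2 := dist_le_two hζ hz
  unfold mengerCurvature
  rw [le_div_iff₀ (by positivity)]
  nlinarith [mul_pos d1 d2, mul_pos (mul_pos d1 d2) d3,
    mul_le_mul u1 u2 d2.le (by norm_num : (0:ℝ) ≤ 2),
    mul_le_mul (mul_le_mul u1 u2 d2.le (by norm_num : (0:ℝ) ≤ 2)) u3 d3.le
      (by norm_num : (0:ℝ) ≤ 2*2)]

/-- Scaling of Menger curvature under a corner map. -/
lemma menger_scale (a z w ζ : ℂ) :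
    mengerCurvature (a + z/4) (a + w/4) (a + ζ/4) = 4 * mengerCurvature z w ζ := by
  unfold mengerCurvature
  have hd : ∀ u v : ℂ, dist (a + u/4) (a + v/4) = dist u v / 4 := by
    intro u v
    rw [Complex.dist_eq, Complex.dist_eq, show (a + u/4) - (a + v/4) = (u - v)/4 by ring,
      norm_div]
    norm_num
  have hm : ((a + w/4) - (a + z/4)) * (starRingEnd ℂ) ((a + ζ/4) - (a + z/4))
      = ((w - z) * (starRingEnd ℂ) (ζ - z)) / 16 := by
    rw [show (a + w/4) - (a + z/4) = (w - z)/4 by ring,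
      show (a + ζ/4) - (a + z/4) = (ζ - z)/4 by ring]
    rw [map_div₀, map_ofNat]
    ring
  rw [hd, hd, hd, hm]
  have him : (((w - z) * (starRingEnd ℂ) (ζ - z)) / 16).im
      = ((w - z) * (starRingEnd ℂ) (ζ - z)).im / 16 := by
    simp [Complex.div_im]
  rw [him, abs_div]
  simp only [div_eq_mul_inv, mul_inv]
  norm_num
  ring

/-- cantorSquare of `w ++ [i]` as nested images. -/
lemma cantorSquare_append (i : Fin 4) (j : Fin 4) (w : List (Fin 4)) :
    cantorSquare ((j :: w) ++ [i]) = cornerMap j '' cantorSquare (w ++ [i]) := rfl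

/-- Curvature lower bound at generation `n`. -/
lemma menger_gen {i₁ i₂ i₃ : Fin 4} (h12 : i₁ ≠ i₂) (h13 : i₁ ≠ i₃) (h23 : i₂ ≠ i₃) :
    ∀ (w : List (Fin 4)) (z : ℂ), z ∈ cantorSquare (w ++ [i₁]) →
      ∀ w' ∈ cantorSquare (w ++ [i₂]), ∀ ζ ∈ cantorSquare (w ++ [i₃]),
      3/64 * 4 ^ w.length ≤ mengerCurvature z w' ζ := by
  intro w
  induction w with
  | nil =>
      intro z hz w' hw' ζ hζ
      simpa using menger_base h12 h13 h23 hz hw' hζ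
  | cons j w ih =>
      intro z hz w' hw' ζ hζ
      rw [cantorSquare_append] at hz hw' hζ
      obtain ⟨z₀, hz₀, rfl⟩ := hz
      obtain ⟨w₀, hw₀, rfl⟩ := hw'
      obtain ⟨ζ₀, hζ₀, rfl⟩ := hζ
      have := ih z₀ hz₀ w₀ hw₀ ζ₀ hζ₀
      have hs : mengerCurvature (cornerMap j z₀) (cornerMap j w₀) (cornerMap j ζ₀)
          = 4 * mengerCurvature z₀ w₀ ζ₀ := menger_scale _ z₀ w₀ ζ₀
      rw [hs]
      calc (3:ℝ)/64 * 4 ^ (j :: w).length = 4 * (3/64 * 4 ^ w.length) := by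
            simp [List.length_cons]; ring
        _ ≤ 4 * mengerCurvature z₀ w₀ ζ₀ := by linarith
      
lemma cantorSquare_isCompact (w : List (Fin 4)) : IsCompact (cantorSquare w) := by
  induction w with
  | nil =>
      rw [show cantorSquare [] = unitSquare from rfl,
        Metric.isCompact_iff_isClosed_bounded]
      constructor
      · exact (isClosed_Icc.preimage Complex.continuous_re).inter
          (isClosed_Icc.preimage Complex.continuous_im)
      · apply Metric.isBounded_closedBall (x := (0:ℂ)) (r := 2) |>.subset
        intro z hz
        obtain ⟨⟨h1, h2⟩, h3, h4⟩ := hz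
        simp only [Metric.mem_closedBall, Complex.dist_eq, sub_zero]
        calc ‖z‖ ≤ |z.re| + |z.im| := Complex.norm_le_abs_re_add_abs_im z
          _ ≤ 2 := by
              have e1 : |z.re| ≤ 1 := abs_le.2 ⟨by linarith, h2⟩
              have e2 : |z.im| ≤ 1 := abs_le.2 ⟨by linarith, h4⟩
              linarith
  | cons j w ih =>
      have hc : Continuous (cornerMap j) := by
        unfold cornerMap
        fun_prop
      exact ih.image hc

lemma cantorSquare_measurable (w : List (Fin 4)) : MeasurableSet (cantorSquare w) :=
  (cantorSquare_isCompact w).isClosed.measurableSet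

/-- For the natural measure on the corner-quarters Cantor set, the triple Menger
curvature integral over any three distinct children of a generation-`n` square is
bounded below by `c·4^{2n}·4^{-3n}`. -/
theorem cantor_menger_children_lower_bound :
    ∃ c : ℝ, 0 < c ∧ ∀ μ : Measure ℂ, IsProbabilityMeasure μ →
      (∀ w : List (Fin 4), μ (cantorSquare w) = (1/4 : ENNReal) ^ w.length) →
      ∀ (w : List (Fin 4)) (i₁ i₂ i₃ : Fin 4), i₁ ≠ i₂ → i₁ ≠ i₃ → i₂ ≠ i₃ →
        ENNReal.ofReal (c * 4 ^ (2 * w.length) * (1/4 : ℝ) ^ (3 * w.length)) ≤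
          ∫⁻ z in cantorSquare (w ++ [i₁]), ∫⁻ w' in cantorSquare (w ++ [i₂]),
            ∫⁻ ζ in cantorSquare (w ++ [i₃]),
              ENNReal.ofReal (mengerCurvature z w' ζ ^ 2) ∂μ ∂μ ∂μ := by
  refine ⟨9/262144, by norm_num, ?_⟩
  intro μ hprob hμ w i₁ i₂ i₃ h12 h13 h23
  set n := w.length with hn
  set Q₁ := cantorSquare (w ++ [i₁])
  set Q₂ := cantorSquare (w ++ [i₂])
  set Q₃ := cantorSquare (w ++ [i₃])
  have hQ₁ : MeasurableSet Q₁ := cantorSquare_measurable _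
  have hQ₂ : MeasurableSet Q₂ := cantorSquare_measurable _
  have hQ₃ : MeasurableSet Q₃ := cantorSquare_measurable _
  set K : ENNReal := ENNReal.ofReal ((3/64 * 4 ^ n) ^ 2) with hK
  have key : ∀ z ∈ Q₁, ∀ w' ∈ Q₂, ∀ ζ ∈ Q₃,
      K ≤ ENNReal.ofReal (mengerCurvature z w' ζ ^ 2) := by
    intro z hz w' hw' ζ hζ
    apply ENNReal.ofReal_le_ofReal
    have h := menger_gen h12 h13 h23 w z hz w' hw' ζ hζ
    have h0 : (0:ℝ) ≤ 3/64 * 4 ^ n := by positivity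
    exact pow_le_pow_left₀ h0 h 2
  have step3 : ∀ z ∈ Q₁, ∀ w' ∈ Q₂,
      K * μ Q₃ ≤ ∫⁻ ζ in Q₃, ENNReal.ofReal (mengerCurvature z w' ζ ^ 2) ∂μ := by
    intro z hz w' hw'
    calc K * μ Q₃ = ∫⁻ _ in Q₃, K ∂μ := (setLIntegral_const _ _).symm
      _ ≤ _ := setLIntegral_mono' hQ₃ (fun ζ hζ => key z hz w' hw' ζ hζ)
  have step2 : ∀ z ∈ Q₁,
      K * μ Q₃ * μ Q₂ ≤ ∫⁻ w' in Q₂,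
        ∫⁻ ζ in Q₃, ENNReal.ofReal (mengerCurvature z w' ζ ^ 2) ∂μ ∂μ := by
    intro z hz
    calc K * μ Q₃ * μ Q₂ = ∫⁻ _ in Q₂, K * μ Q₃ ∂μ := (setLIntegral_const _ _).symm
      _ ≤ _ := setLIntegral_mono' hQ₂ (fun w' hw' => step3 z hz w' hw')
  have step1 : K * μ Q₃ * μ Q₂ * μ Q₁ ≤ ∫⁻ z in Q₁, ∫⁻ w' in Q₂,
        ∫⁻ ζ in Q₃, ENNReal.ofReal (mengerCurvature z w' ζ ^ 2) ∂μ ∂μ ∂μ := by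
    calc K * μ Q₃ * μ Q₂ * μ Q₁ = ∫⁻ _ in Q₁, K * μ Q₃ * μ Q₂ ∂μ :=
          (setLIntegral_const _ _).symm
      _ ≤ _ := setLIntegral_mono' hQ₁ step2
  refine le_trans ?_ step1
  have hμ₁ : μ Q₁ = (1/4 : ENNReal) ^ (n + 1) := by
    rw [hμ]; simp [hn]
  have hμ₂ : μ Q₂ = (1/4 : ENNReal) ^ (n + 1) := by
    rw [hμ]; simp [hn]
  have hμ₃ : μ Q₃ = (1/4 : ENNReal) ^ (n + 1) := by
    rw [hμ]; simp [hn]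
  rw [hμ₁, hμ₂, hμ₃]
  have h14 : (1/4 : ENNReal) = ENNReal.ofReal (1/4) := by
    rw [ENNReal.ofReal_div_of_pos (by norm_num)]
    simp
  rw [h14, ← ENNReal.ofReal_pow (by norm_num)]
  rw [hK, ← ENNReal.ofReal_mul (by positivity), ← ENNReal.ofReal_mul (by positivity),
    ← ENNReal.ofReal_mul (by positivity)]
  apply ENNReal.ofReal_le_ofReal
  apply le_of_eq
  rw [pow_mul', pow_mul', pow_succ]
  ring
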